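/- arXiv:2308.16302 — 2 statements merged into one kernel-verified Lean document; each statement's English description precedes it below -/
import Mathlib

section
/- Let N be a prime, let n1, n2 be integers with N ∤ n1 and N ∤ n2, and let χ be any Dirichlet character modulo N. Then Σ_{a mod N, gcd(a,N)=1} χ(a) · S(n1, a; N) · S(n2, a; N) = G_χ(1)² · Σ_{u mod N, gcd(u,N)=1} conj(χ)(u+1) · conj(χ)(n1·u⁻¹ + n2) + δ_χ · D(n1, n2), where u⁻¹ is the inverse of u modulo N, δ_χ = 1 if χ is the principal character modulo N and δ_χ = 0 otherwise, and D(n1,n2) = φ(N)² if N | n1 − n2 and D(n1,n2) = −2φ(N) otherwise. -/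
/-- `e(x/q)`-type additive character: for `x : ZMod q`, `eZMod q x = exp(2πi·x/q)`. -/
noncomputable def eZMod (q : ℕ) (x : ZMod q) : ℂ :=
  Complex.exp (2 * Real.pi * Complex.I * (x.val : ℂ) / (q : ℂ))

/-- Kloosterman sum `S(m, n; q) = Σ_{d mod q, gcd(d,q)=1} e((m·d + n·d⁻¹)/q)`. -/
noncomputable def kloostermanS (q : ℕ) (m n : ZMod q) : ℂ :=
  ∑ d ∈ (Finset.range q).filter (fun d => Nat.gcd d q = 1),
    eZMod q (m * (d : ZMod q) + n * ((d : ZMod q)⁻¹))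

/-- Gauss sum `G_χ(n) = Σ_{a mod q} χ(a) e(a·n/q)`. -/
noncomputable def gaussS (q : ℕ) (χ : DirichletCharacter ℂ q) (n : ZMod q) : ℂ :=
  ∑ a ∈ Finset.range q, χ (a : ZMod q) * eZMod q ((a : ZMod q) * n)

/-- Ramanujan sum `R(n, q) = Σ_{a mod q, gcd(a,q)=1} e(a·n/q)`. -/
noncomputable def ramanujanS (q : ℕ) (n : ZMod q) : ℂ :=
  ∑ a ∈ (Finset.range q).filter (fun a => Nat.gcd a q = 1), eZMod q ((a : ZMod q) * n)

/-!
Work over a finite field `F` with a nontrivial additive character `ψ`, and let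
`g(t) = Σ_a χ(a) ψ(ta)` and `G = g(1)`. Then `g(t) = χ̄(t) G`, except for an extra `|F^×|` at
`t = 0` when `χ` is principal. Opening both Kloosterman sums turns the left side into
`Σ_{d₁,d₂} ψ(m₁d₁ + m₂d₂) g(d₁⁻¹ + d₂⁻¹)`. Substituting `d₁ = u d₂` turns the main part into
`G Σ_u χ̄(u⁻¹ + 1) g(m₁u + m₂)`, hence into `G² Σ_u χ̄(u + 1) χ̄(m₁u⁻¹ + m₂)` after `u ↦ u⁻¹`.
For the principal character the two correction terms, coming from `d₂ = -d₁` and from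
`u = -m₂/m₁`, add up (using `G = -1`) to `|F^×|²` if `m₁ = m₂` and to `-2|F^×|` otherwise.
-/

open Finset

open scoped Classical

noncomputable def kloostermanSum {A R : Type*} [CommRing A] [Fintype Aˣ] [CommRing R]
    (ψ : AddChar A R) (m n : A) : R :=
  ∑ d : Aˣ, ψ (m * d + n * ↑d⁻¹)

lemma MulChar.sum_units_mul {M R : Type*} [CommMonoid M] [Fintype M] [DecidableEq M]
    [CommSemiring R] (χ : MulChar M R) (f : M → R) :
    ∑ u : Mˣ, χ u * f u = ∑ a, χ a * f a :=
  Fintype.sum_of_injective _ Units.val_injective _ _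
    (fun a ha ↦ by rw [χ.map_nonunit (by simpa [IsUnit] using ha), zero_mul]) (fun _ ↦ rfl)

section FiniteField

variable {F R : Type*} [Field F] [Fintype F] [DecidableEq F] [CommRing R]

lemma sum_mulChar_mul_kloostermanSum_mul_kloostermanSum_eq_sum_sum (χ : MulChar F R)
    (ψ : AddChar F R) (m₁ m₂ : F) :
    ∑ a : Fˣ, χ a * kloostermanSum ψ m₁ a * kloostermanSum ψ m₂ a =
      ∑ d₁ : Fˣ, ∑ d₂ : Fˣ,
        ψ (m₁ * d₁ + m₂ * d₂) * gaussSum χ (ψ.mulShift ((d₁ : F)⁻¹ + (d₂ : F)⁻¹)) := by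
  simp_rw [gaussSum, ← MulChar.sum_units_mul, kloostermanSum, mul_sum, sum_mul]
  conv_rhs => rw [sum_comm]
  rw [sum_comm]
  refine sum_congr rfl fun d₂ _ ↦ ?_
  rw [sum_comm]
  refine sum_congr rfl fun d₁ _ ↦ sum_congr rfl fun a _ ↦ ?_
  simp only [AddChar.mulShift_apply, Units.val_inv_eq_inv_val, add_mul, AddChar.map_add_eq_mul]
  rw [mul_comm (d₁ : F)⁻¹, mul_comm (d₂ : F)⁻¹]
  ring

lemma sum_sum_addChar_mul_inv_mulChar_eq_sum_gaussSum (χ : MulChar F R) (ψ : AddChar F R)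
    (m₁ m₂ : F) :
    ∑ d₁ : Fˣ, ∑ d₂ : Fˣ, ψ (m₁ * d₁ + m₂ * d₂) * χ⁻¹ ((d₁ : F)⁻¹ + (d₂ : F)⁻¹) =
      ∑ u : Fˣ, χ⁻¹ ((u : F)⁻¹ + 1) * gaussSum χ (ψ.mulShift (m₁ * u + m₂)) := by
  simp_rw [gaussSum, ← MulChar.sum_units_mul, mul_sum]
  conv_rhs => rw [sum_comm]
  rw [sum_comm]
  refine sum_congr rfl fun d _ ↦ ?_
  rw [← Equiv.sum_comp (Equiv.mulRight d)]
  refine sum_congr rfl fun u _ ↦ ?_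
  have hd : (d : F) ≠ 0 := d.ne_zero
  have hu : (u : F) ≠ 0 := u.ne_zero
  have harg : ((u : F) * d)⁻¹ + (d : F)⁻¹ = (d : F)⁻¹ * ((u : F)⁻¹ + 1) := by
    field_simp
  have hlin : m₁ * (u * d) + m₂ * d = (m₁ * u + m₂) * d := by ring
  simp only [Equiv.coe_mulRight, Units.val_mul, harg, hlin, map_mul,
    MulChar.inv_apply' χ (d : F)⁻¹, inv_inv, AddChar.mulShift_apply]
  ring

lemma sum_sum_addChar_mul_ite_inv_add_inv_eq_zero (ψ : AddChar F R) (m₁ m₂ : F) (c : R) :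
    ∑ d₁ : Fˣ, ∑ d₂ : Fˣ,
        ψ (m₁ * d₁ + m₂ * d₂) * (if (d₁ : F)⁻¹ + (d₂ : F)⁻¹ = 0 then c else 0) =
      c * ∑ d : Fˣ, ψ ((m₁ - m₂) * d) := by
  rw [mul_sum]
  refine sum_congr rfl fun d₁ _ ↦ ?_
  have hd : ∀ d₂ : Fˣ, (d₁ : F)⁻¹ + (d₂ : F)⁻¹ = 0 ↔ d₂ = -d₁ := by
    intro d₂
    rw [add_eq_zero_iff_neg_eq, ← inv_neg, inv_inj, eq_comm, ← Units.val_neg, Units.val_inj]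
  have hlin : m₁ * d₁ + m₂ * -d₁ = (m₁ - m₂) * d₁ := by ring
  simp only [hd, mul_ite, mul_zero, sum_ite_eq', mem_univ, if_true, Units.val_neg, hlin]
  ring

lemma sum_units_mulChar_mul_ite_mul_add_eq_zero (χ : MulChar F R) {m₁ m₂ : F} (h₁ : m₁ ≠ 0)
    (h₂ : m₂ ≠ 0) (c : R) :
    ∑ u : Fˣ, χ ((u : F)⁻¹ + 1) * (if m₁ * u + m₂ = 0 then c else 0) = χ (1 - m₁ / m₂) * c := by
  have hu : ∀ u : Fˣ,
      m₁ * u + m₂ = 0 ↔ u = Units.mk0 (-m₂ / m₁) (div_ne_zero (neg_ne_zero.2 h₂) h₁) := by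
    intro u
    rw [← Units.val_inj, Units.val_mk0]
    constructor <;> intro h
    · field_simp
      linear_combination h
    · rw [h]
      field_simp
      ring
  have hval : (-m₂ / m₁)⁻¹ + 1 = 1 - m₁ / m₂ := by
    field_simp
    ring
  simp only [hu, mul_ite, mul_zero, sum_ite_eq', mem_univ, if_true, Units.val_mk0, hval]

variable [IsDomain R]

lemma gaussSum_mulShift_eq_add (χ : MulChar F R) (ψ : AddChar F R) (t : F) :
    gaussSum χ (ψ.mulShift t) = χ⁻¹ t * gaussSum χ ψ +
      (if χ = 1 then 1 else 0) * (if t = 0 then (Nat.card Fˣ : R) else 0) := by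
  rcases eq_or_ne t 0 with rfl | ht
  · rw [AddChar.mulShift_zero, MulChar.map_zero, zero_mul, zero_add, if_pos rfl]
    split_ifs with hχ
    · rw [hχ, gaussSum_one_one, one_mul]
    · rw [gaussSum_one_right hχ, zero_mul]
  · simpa [ht] using gaussSum_mulShift_eq χ ψ (Units.mk0 t ht)

lemma sum_units_addChar_mul {ψ : AddChar F R} (hψ : ψ ≠ 1) (c : F) :
    ∑ d : Fˣ, ψ (c * d) = if c = 0 then (Nat.card Fˣ : R) else -1 := by
  have h : ∑ d : Fˣ, ψ (c * d) = gaussSum 1 (ψ.mulShift c) := by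
    simp [gaussSum, ← MulChar.sum_units_mul]
  rw [h, gaussSum_mulShift_eq_add, gaussSum_one_left hψ, inv_one, if_pos rfl, one_mul]
  rcases eq_or_ne c 0 with rfl | hc
  · simp [MulChar.map_zero]
  · simp [hc, MulChar.one_apply hc.isUnit]

lemma sum_sum_addChar_mul_inv_mulChar_eq_gaussSum_mul_add (χ : MulChar F R) (ψ : AddChar F R)
    {m₁ m₂ : F} (h₁ : m₁ ≠ 0) (h₂ : m₂ ≠ 0) :
    ∑ d₁ : Fˣ, ∑ d₂ : Fˣ, ψ (m₁ * d₁ + m₂ * d₂) * χ⁻¹ ((d₁ : F)⁻¹ + (d₂ : F)⁻¹) =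
      gaussSum χ ψ * ∑ u : Fˣ, χ⁻¹ (u + 1) * χ⁻¹ (m₁ * (u : F)⁻¹ + m₂) +
        (if χ = 1 then 1 else 0) * Nat.card Fˣ * χ⁻¹ (1 - m₁ / m₂) := by
  have hinv : ∑ u : Fˣ, χ⁻¹ ((u : F)⁻¹ + 1) * χ⁻¹ (m₁ * u + m₂) =
      ∑ u : Fˣ, χ⁻¹ (u + 1) * χ⁻¹ (m₁ * (u : F)⁻¹ + m₂) := by
    rw [← Equiv.sum_comp (Equiv.inv Fˣ)]
    simp only [Equiv.inv_apply, Units.val_inv_eq_inv_val, inv_inv]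
  have hsplit : ∀ u : Fˣ, χ⁻¹ ((u : F)⁻¹ + 1) * gaussSum χ (ψ.mulShift (m₁ * u + m₂)) =
      gaussSum χ ψ * (χ⁻¹ ((u : F)⁻¹ + 1) * χ⁻¹ (m₁ * u + m₂)) +
        (if χ = 1 then 1 else 0) * (χ⁻¹ ((u : F)⁻¹ + 1) *
          if m₁ * u + m₂ = 0 then (Nat.card Fˣ : R) else 0) := by
    intro u
    rw [gaussSum_mulShift_eq_add]
    ring
  simp only [sum_sum_addChar_mul_inv_mulChar_eq_sum_gaussSum, hsplit, sum_add_distrib, ← mul_sum,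
    hinv, sum_units_mulChar_mul_ite_mul_add_eq_zero χ⁻¹ h₁ h₂]
  ring

theorem sum_mulChar_mul_kloostermanSum_mul_kloostermanSum (χ : MulChar F R) {ψ : AddChar F R}
    (hψ : ψ ≠ 1) {m₁ m₂ : F} (h₁ : m₁ ≠ 0) (h₂ : m₂ ≠ 0) :
    ∑ a : Fˣ, χ a * kloostermanSum ψ m₁ a * kloostermanSum ψ m₂ a =
      gaussSum χ ψ ^ 2 * ∑ u : Fˣ, χ⁻¹ (u + 1) * χ⁻¹ (m₁ * (u : F)⁻¹ + m₂) +
        (if χ = 1 then 1 else 0) *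
          (if m₁ = m₂ then (Nat.card Fˣ : R) ^ 2 else -2 * Nat.card Fˣ) := by
  have hsplit : ∀ d₁ d₂ : Fˣ, ψ (m₁ * d₁ + m₂ * d₂) *
      gaussSum χ (ψ.mulShift ((d₁ : F)⁻¹ + (d₂ : F)⁻¹)) =
        gaussSum χ ψ * (ψ (m₁ * d₁ + m₂ * d₂) * χ⁻¹ ((d₁ : F)⁻¹ + (d₂ : F)⁻¹)) +
          (if χ = 1 then 1 else 0) * (ψ (m₁ * d₁ + m₂ * d₂) *
            if (d₁ : F)⁻¹ + (d₂ : F)⁻¹ = 0 then (Nat.card Fˣ : R) else 0) := by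
    intro d₁ d₂
    rw [gaussSum_mulShift_eq_add]
    ring
  simp only [sum_mulChar_mul_kloostermanSum_mul_kloostermanSum_eq_sum_sum, hsplit, sum_add_distrib,
    ← mul_sum, sum_sum_addChar_mul_inv_mulChar_eq_gaussSum_mul_add χ ψ h₁ h₂,
    sum_sum_addChar_mul_ite_inv_add_inv_eq_zero, sum_units_addChar_mul hψ, sub_eq_zero]
  by_cases hχ : χ = 1
  · subst hχ
    rw [gaussSum_one_left hψ, if_pos rfl, inv_one]
    rcases eq_or_ne m₁ m₂ with rfl | hm
    · rw [div_self h₁, sub_self, MulChar.map_zero, if_pos rfl, if_pos rfl]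
      ring
    · have : 1 - m₁ / m₂ ≠ 0 := by
        rwa [sub_ne_zero, ne_comm, ne_eq, div_eq_one_iff_eq h₂]
      rw [MulChar.one_apply this.isUnit, if_neg hm, if_neg hm]
      ring
  · rw [if_neg hχ]
    ring

end FiniteField

section ZMod

variable {N : ℕ} [NeZero N]

lemma eZMod_eq_stdAddChar (x : ZMod N) : eZMod N x = ZMod.stdAddChar x := by
  rw [eZMod, ZMod.stdAddChar_apply, ZMod.toCircle_apply]

lemma range_eq_map_val : range N = univ.map ⟨ZMod.val, ZMod.val_injective N⟩ := by
  ext a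
  simp only [mem_range, mem_map, mem_univ, true_and, Function.Embedding.coeFn_mk]
  exact ⟨fun ha ↦ ⟨a, ZMod.val_cast_of_lt ha⟩, fun ⟨x, hx⟩ ↦ hx ▸ x.val_lt⟩

lemma range_filter_coprime_eq_map_units :
    (range N).filter (fun a ↦ a.gcd N = 1) =
      univ.map ⟨fun u : (ZMod N)ˣ ↦ (u : ZMod N).val,
        (ZMod.val_injective N).comp Units.val_injective⟩ := by
  ext a
  simp only [mem_filter, mem_range, mem_map, mem_univ, true_and, Function.Embedding.coeFn_mk]
  constructor
  · rintro ⟨ha, hcop⟩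
    exact ⟨ZMod.unitOfCoprime a hcop, by simp [ZMod.val_cast_of_lt ha]⟩
  · rintro ⟨u, rfl⟩
    exact ⟨ZMod.val_lt _, ZMod.val_coe_unit_coprime u⟩

lemma gaussS_one_eq_gaussSum (χ : DirichletCharacter ℂ N) :
    gaussS N χ 1 = gaussSum χ ZMod.stdAddChar := by
  simp [gaussS, range_eq_map_val, eZMod_eq_stdAddChar, gaussSum]

lemma kloostermanS_eq_kloostermanSum (m n : ZMod N) :
    kloostermanS N m n = kloostermanSum ZMod.stdAddChar m n := by
  simp [kloostermanS, range_filter_coprime_eq_map_units, eZMod_eq_stdAddChar, kloostermanSum]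

end ZMod

/-- For `N` prime, `N ∤ n1, n2`, and `χ` a Dirichlet character mod `N`:
`Σ_{a mod N, (a,N)=1} χ(a) S(n1,a;N) S(n2,a;N)
  = G_χ(1)² Σ_{u mod N, (u,N)=1} conj(χ)(u+1) conj(χ)(n1 u⁻¹ + n2) + δ_χ D(n1,n2)`,
where `δ_χ = 1` iff `χ` is principal, and `D(n1,n2) = φ(N)²` if `N ∣ n1 − n2`,
`D(n1,n2) = −2φ(N)` otherwise. -/
theorem stmt2 (N : ℕ) (hN : N.Prime) (n1 n2 : ℤ)
    (h1 : ¬ (N : ℤ) ∣ n1) (h2 : ¬ (N : ℤ) ∣ n2) (χ : DirichletCharacter ℂ N) :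
    ∑ a ∈ (Finset.range N).filter (fun a => Nat.gcd a N = 1),
        χ ((a : ℕ) : ZMod N) * kloostermanS N (n1 : ZMod N) ((a : ℕ) : ZMod N) *
          kloostermanS N (n2 : ZMod N) ((a : ℕ) : ZMod N) =
      (gaussS N χ (1 : ZMod N)) ^ 2 *
          ∑ u ∈ (Finset.range N).filter (fun u => Nat.gcd u N = 1),
            (starRingEnd ℂ) (χ (((u : ℕ) : ZMod N) + 1)) *
              (starRingEnd ℂ) (χ ((n1 : ZMod N) * (((u : ℕ) : ZMod N))⁻¹ + (n2 : ZMod N)))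
        + (if χ = 1 then (1 : ℂ) else 0) *
            (if (N : ℤ) ∣ n1 - n2 then ((N.totient : ℂ)) ^ 2 else -2 * (N.totient : ℂ)) := by
  have : Fact N.Prime := ⟨hN⟩
  have hψ : (ZMod.stdAddChar : AddChar (ZMod N) ℂ) ≠ 1 := by
    simpa using ZMod.isPrimitive_stdAddChar N one_ne_zero
  have hm : ∀ n : ℤ, ¬ (N : ℤ) ∣ n → (n : ZMod N) ≠ 0 := fun n h ↦ by
    rwa [Ne, ZMod.intCast_zmod_eq_zero_iff_dvd]
  have hdvd : (N : ℤ) ∣ n1 - n2 ↔ (n1 : ZMod N) = n2 := by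
    rw [eq_comm, ZMod.intCast_eq_intCast_iff_dvd_sub]
  have htot : (N.totient : ℂ) = Nat.card (ZMod N)ˣ := by
    rw [Nat.card_eq_fintype_card, ZMod.card_units_eq_totient]
  simp only [range_filter_coprime_eq_map_units, sum_map, Function.Embedding.coeFn_mk,
    ZMod.natCast_zmod_val, kloostermanS_eq_kloostermanSum, gaussS_one_eq_gaussSum,
    starRingEnd_apply, MulChar.star_apply', hdvd, htot]
  -- the two sides differ only in the `Decidable (χ = 1)` instance
  convert sum_mulChar_mul_kloostermanSum_mul_kloostermanSum χ hψ (hm n1 h1) (hm n2 h2)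
end

section
/- Let r and r1 be positive integers with r | r1, let χ be a Dirichlet character modulo r, and let m be an integer. Then Σ_{u mod r1} χ(u mod r) · e(um/r1) = (r1/r) · G_χ(mr/r1) if r1 | mr, and the sum equals 0 otherwise. -/
open Finset

theorem Finset.sum_range_mul_eq_sum_sum {M : Type*} [AddCommMonoid M] (r k : ℕ) (f : ℕ → M) :
    ∑ u ∈ range (r * k), f u = ∑ a ∈ range r, ∑ t ∈ range k, f (a + r * t) := by
  induction k with
  | zero => simp
  | succ k ih =>
    rw [mul_add_one, sum_range_add, ih, ← sum_add_distrib]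
    refine sum_congr rfl fun a _ => ?_
    rw [sum_range_succ, add_comm (r * k)]

theorem ZMod.sum_range_natCast {M : Type*} [AddCommMonoid M] (n : ℕ) [NeZero n]
    (f : ZMod n → M) : ∑ i ∈ range n, f i = ∑ i, f i :=
  sum_nbij' (↑) ZMod.val (by simp) (by simp [ZMod.val_lt])
    (fun i hi => by simp [Nat.mod_eq_of_lt (mem_range.1 hi)]) (by simp) (by simp)

section

open ZMod

theorem ZMod.stdAddChar_mul_intCast {a b N : ℕ} [NeZero N] [NeZero b] (h : a * b = N) (j : ℤ) :
    stdAddChar ((a * j : ℤ) : ZMod N) = stdAddChar (j : ZMod b) := by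
  subst h
  have : (a : ℂ) ≠ 0 := Nat.cast_ne_zero.2 (left_ne_zero_of_mul (NeZero.ne (a * b)))
  rw [stdAddChar_coe, stdAddChar_coe]
  push_cast
  field_simp

theorem eZMod_eq_stdAddChar_s6 (q : ℕ) [NeZero q] (x : ZMod q) : eZMod q x = stdAddChar x := by
  rw [stdAddChar_apply, toCircle_apply, eZMod]

theorem eZMod_natCast_add_mul_mul (r k : ℕ) [NeZero r] [NeZero k] (a t : ℕ) (m : ℤ) :
    eZMod (r * k) (((a + r * t : ℕ) : ZMod (r * k)) * m) =
      stdAddChar ((a * m : ℤ) : ZMod (r * k)) * stdAddChar ((t : ZMod k) * (m : ZMod k)) := by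
  have hsplit : ((a + r * t : ℕ) : ZMod (r * k)) * m =
      ((a * m : ℤ) : ZMod (r * k)) + ((r * (t * m) : ℤ) : ZMod (r * k)) := by
    push_cast
    ring
  rw [eZMod_eq_stdAddChar_s6, hsplit, AddChar.map_add_eq_mul, stdAddChar_mul_intCast rfl]
  push_cast
  rfl

theorem sum_character_mul_eZMod_eq_mul_sum (r k : ℕ) [NeZero r] [NeZero k]
    (χ : DirichletCharacter ℂ r) (m : ℤ) :
    ∑ u ∈ range (r * k), χ u * eZMod (r * k) ((u : ZMod (r * k)) * m) =
      (∑ a ∈ range r, χ a * stdAddChar ((a * m : ℤ) : ZMod (r * k))) *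
        ∑ t : ZMod k, stdAddChar (t * (m : ZMod k)) := by
  rw [sum_range_mul_eq_sum_sum]
  simp_rw [eZMod_natCast_add_mul_mul, sum_mul_sum, ← sum_range_natCast, ← mul_assoc]
  simp

theorem sum_character_mul_stdAddChar_eq_gaussS (r k : ℕ) [NeZero r] [NeZero k]
    (χ : DirichletCharacter ℂ r) (n : ℤ) :
    ∑ a ∈ range r, χ a * stdAddChar ((a * (k * n) : ℤ) : ZMod (r * k)) = gaussS r χ n := by
  refine sum_congr rfl fun a _ => ?_
  rw [eZMod_eq_stdAddChar_s6, show (a : ℤ) * (k * n) = k * (a * n) by ring,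
    stdAddChar_mul_intCast (mul_comm k r)]
  push_cast
  rfl

end

/-- For positive integers `r ∣ r1`, a Dirichlet character `χ` mod `r`
and an integer `m`: `Σ_{u mod r1} χ(u mod r) e(um/r1) = (r1/r)·G_χ(mr/r1)` if `r1 ∣ mr`,
and the sum is `0` otherwise. -/
theorem stmt6 (r r1 : ℕ) (hr : 0 < r) (hr1 : 0 < r1) (hdvd : r ∣ r1)
    (χ : DirichletCharacter ℂ r) (m : ℤ) :
    ∑ u ∈ Finset.range r1, χ ((u : ℕ) : ZMod r) * eZMod r1 (((u : ℕ) : ZMod r1) * (m : ZMod r1)) =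
      if (r1 : ℤ) ∣ m * (r : ℤ) then
        (((r1 / r : ℕ)) : ℂ) * gaussS r χ ((m * (r : ℤ) / (r1 : ℤ) : ℤ) : ZMod r)
      else 0 := by
  obtain ⟨k, rfl⟩ := hdvd
  have : NeZero r := ⟨hr.ne'⟩
  have : NeZero k := ⟨right_ne_zero_of_mul hr1.ne'⟩
  have hdvd_iff : ((r * k : ℕ) : ℤ) ∣ m * r ↔ (k : ℤ) ∣ m := by
    rw [Nat.cast_mul, mul_comm (r : ℤ)]
    exact mul_dvd_mul_iff_right (by exact_mod_cast hr.ne')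
  simp only [sum_character_mul_eZMod_eq_mul_sum,
    AddChar.sum_mulShift _ (ZMod.isPrimitive_stdAddChar k), ZMod.intCast_zmod_eq_zero_iff_dvd,
    hdvd_iff]
  split_ifs with hkm
  · obtain ⟨n, rfl⟩ := hkm
    have hquot : (k : ℤ) * n * r / (r * k : ℕ) = n := by
      rw [show (k : ℤ) * n * r = n * (r * k : ℕ) by push_cast; ring]
      exact Int.mul_ediv_cancel n (by exact_mod_cast hr1.ne')
    rw [hquot, Nat.mul_div_cancel_left k hr, sum_character_mul_stdAddChar_eq_gaussS, ZMod.card,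
      mul_comm]
  · rw [Nat.cast_zero, mul_zero]
end
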